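/- arXiv:2605.23460 — 6 statements merged into one kernel-verified Lean document; each statement's English description precedes it below -/
import Mathlib

section
/- Let α₁,...,αₙ be distinct elements of a field and write ∏_{i=1}^n (x - αᵢ) = ∑_{i=0}^n σᵢ x^{n-i}. Define Λ₀ = 1 and Λ₁, Λ₂, ... recursively by ∑_{j=0}^{t} σⱼ Λ_{t-j} = 0 for t ≥ 1. Fix 0 ≤ t ≤ n. If f(x) is the unique polynomial of degree at most n-1 with f(αᵢ) = αᵢ^{n-1+t} for all 1 ≤ i ≤ n, then the coefficient of x^{n-1} in f equals Λ_t. -/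
open Polynomial Finset

/-- with σ the coefficients of ∏(x-αᵢ) = ∑ σᵢ x^{n-i} and Λ defined by
Λ₀ = 1 and ∑_{j=0}^t σⱼ Λ_{t-j} = 0 for t ≥ 1, if f is the polynomial of degree < n
interpolating (αᵢ, αᵢ^{n-1+t}), then the coefficient of x^{n-1} of f equals Λ_t. -/
theorem stmt2 {F : Type*} [Field F] {n : ℕ} (hn : 1 ≤ n)
    (α : Fin n → F) (hα : Function.Injective α)
    (σ Λ : ℕ → F)
    (hσ : ∀ i ≤ n, σ i = (∏ j, (X - C (α j))).coeff (n - i))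
    (hΛ0 : Λ 0 = 1)
    (hΛ : ∀ t : ℕ, 1 ≤ t → ∑ j ∈ Finset.range (t + 1), σ j * Λ (t - j) = 0)
    (t : ℕ) (ht : t ≤ n)
    (f : Polynomial F) (hdeg : f.degree < n)
    (hf : ∀ i, f.eval (α i) = α i ^ (n - 1 + t)) :
    f.coeff (n - 1) = Λ t := by
  classical
  set M : Polynomial F := ∏ j, (X - C (α j)) with hMdef
  have hMmonic : M.Monic := monic_prod_of_monic _ _ fun j _ => monic_X_sub_C _
  have hMdeg : M.natDegree = n := by
    rw [hMdef, natDegree_prod]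
    · simp
    · intro i _; exact X_sub_C_ne_zero _
  have hMdegree : M.degree = (n : ℕ) := by
    rw [degree_eq_natDegree hMmonic.ne_zero, hMdeg]
  have hmodlt : ∀ p : Polynomial F, (p %ₘ M).degree < (n : ℕ) :=
    fun p => hMdegree ▸ degree_modByMonic_lt p hMmonic
  have hrootM : ∀ i, M.eval (α i) = 0 := by
    intro i
    rw [hMdef, eval_prod]
    exact Finset.prod_eq_zero (Finset.mem_univ i) (by simp)
  have hmodeval : ∀ (p : Polynomial F) i, (p %ₘ M).eval (α i) = p.eval (α i) := by
    intro p i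
    conv_rhs => rw [← modByMonic_add_div p M]
    simp [hrootM i]
  -- f is X^(n-1+t) mod M
  have hfeq : f = X ^ (n - 1 + t) %ₘ M := by
    have hd : f - X ^ (n - 1 + t) %ₘ M = 0 := by
      apply eq_zero_of_natDegree_lt_card_of_eval_eq_zero _ hα
      · intro i
        simp [hmodeval, hf i]
      · have h1 : (f - X ^ (n - 1 + t) %ₘ M).degree < (n : ℕ) :=
          lt_of_le_of_lt (degree_sub_le _ _) (max_lt hdeg (hmodlt _))
        rw [Fintype.card_fin]
        by_cases h0 : f - X ^ (n - 1 + t) %ₘ M = 0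
        · rw [h0]; simpa using (show 0 < n by omega)
        · exact (natDegree_lt_iff_degree_lt h0).mpr h1
    exact sub_eq_zero.mp hd
  set Λ' : ℕ → F := fun s => (X ^ (n - 1 + s) %ₘ M).coeff (n - 1) with hΛ'def
  have hfc : f.coeff (n - 1) = Λ' t := by rw [hfeq]
  rw [hfc]
  -- base
  have hΛ'0 : Λ' 0 = 1 := by
    have hx : (X : Polynomial F) ^ (n - 1 + 0) %ₘ M = X ^ (n - 1) := by
      rw [Nat.add_zero, (modByMonic_eq_self_iff hMmonic).2]
      rw [degree_X_pow, hMdegree]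
      exact_mod_cast Nat.sub_lt hn one_pos
    show (X ^ (n - 1 + 0) %ₘ M).coeff (n - 1) = 1
    rw [hx, coeff_X_pow, if_pos rfl]
  -- expansion of M
  have hMsum : M = ∑ j ∈ range (n + 1), (monomial (n - j)) (σ j) := by
    conv_lhs => rw [as_sum_range' M (n + 1) (by rw [hMdeg]; omega)]
    rw [← Finset.sum_range_reflect]
    apply Finset.sum_congr rfl
    intro j hj
    rw [mem_range] at hj
    have h1 : n + 1 - 1 - j = n - j := by omega
    rw [h1, hσ j (by omega)]
  have hσ0 : σ 0 = 1 := by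
    rw [hσ 0 (by omega)]
    simpa [← hMdeg] using hMmonic.coeff_natDegree
  -- recurrence for Λ'
  have hrec : ∀ s, 1 ≤ s → s ≤ n → ∑ j ∈ range (s + 1), σ j * Λ' (s - j) = 0 := by
    intro s hs1 hsn
    have hsum1 : ∑ j ∈ range (s + 1), σ j * Λ' (s - j)
        = ((∑ j ∈ range (s + 1), C (σ j) * X ^ (n - 1 + s - j)) %ₘ M).coeff (n - 1) := by
      rw [show ((∑ j ∈ range (s + 1), C (σ j) * X ^ (n - 1 + s - j)) %ₘ M)
            = modByMonicHom M (∑ j ∈ range (s + 1), C (σ j) * X ^ (n - 1 + s - j)) from rfl]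
      rw [map_sum, finset_sum_coeff]
      apply Finset.sum_congr rfl
      intro j hj
      rw [mem_range] at hj
      have he : n - 1 + s - j = n - 1 + (s - j) := by omega
      show σ j * Λ' (s - j) = ((C (σ j) * X ^ (n - 1 + s - j)) %ₘ M).coeff (n - 1)
      rw [← smul_eq_C_mul, smul_modByMonic, coeff_smul, smul_eq_mul, he]
    have hXM : X ^ (s - 1) * M = ∑ j ∈ range (n + 1), C (σ j) * X ^ (n - 1 + s - j) := by
      rw [hMsum, Finset.mul_sum]
      apply Finset.sum_congr rfl
      intro j hj
      rw [mem_range] at hj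
      rw [← C_mul_X_pow_eq_monomial]
      have he : n - 1 + s - j = (n - j) + (s - 1) := by omega
      rw [he, pow_add]
      try ring
    have hsplit : ∑ j ∈ range (s + 1), C (σ j) * X ^ (n - 1 + s - j)
        = X ^ (s - 1) * M - ∑ j ∈ Ico (s + 1) (n + 1), C (σ j) * X ^ (n - 1 + s - j) := by
      rw [eq_sub_iff_add_eq, hXM, range_eq_Ico, range_eq_Ico]
      exact Finset.sum_Ico_consecutive (fun j => C (σ j) * X ^ (n - 1 + s - j)) (by omega : 0 ≤ s + 1) (by omega : s + 1 ≤ n + 1)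
    have hgdeg : (∑ j ∈ Ico (s + 1) (n + 1), C (σ j) * X ^ (n - 1 + s - j)).degree
        < M.degree := by
      rw [hMdegree]
      apply lt_of_le_of_lt (degree_sum_le _ _)
      rw [Finset.sup_lt_iff (by exact_mod_cast WithBot.bot_lt_coe n)]
      intro j hj
      rw [mem_Ico] at hj
      refine lt_of_le_of_lt (degree_C_mul_X_pow_le _ _) ?_
      exact_mod_cast (by omega : n - 1 + s - j < n)
    rw [hsum1, hsplit, sub_modByMonic, mul_self_modByMonic hMmonic, zero_sub,
      (modByMonic_eq_self_iff hMmonic).2 hgdeg, coeff_neg, finset_sum_coeff]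
    rw [neg_eq_zero]
    apply Finset.sum_eq_zero
    intro j hj
    rw [mem_Ico] at hj
    rw [coeff_C_mul, coeff_X_pow, if_neg (by omega), mul_zero]
  -- strong induction
  have main : ∀ s, s ≤ n → Λ' s = Λ s := by
    intro s
    induction s using Nat.strong_induction_on with
    | _ s ih =>
      intro hsn
      match s, hsn with
      | 0, _ => rw [hΛ'0, hΛ0]
      | (s + 1), hsn =>
        have h1 := hrec (s + 1) (by omega) hsn
        have h2 := hΛ (s + 1) (by omega)
        rw [Finset.sum_range_succ'] at h1 h2
        simp only [Nat.sub_zero, hσ0, one_mul] at h1 h2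
        have hsum : ∑ j ∈ range (s + 1), σ (j + 1) * Λ' (s + 1 - (j + 1))
            = ∑ j ∈ range (s + 1), σ (j + 1) * Λ (s + 1 - (j + 1)) := by
          apply Finset.sum_congr rfl
          intro j hj
          rw [mem_range] at hj
          rw [ih (s + 1 - (j + 1)) (by omega) (by omega)]
        linear_combination h1 - h2 - hsum
  exact main t ht
end

section
/- Let α₁,...,αₙ be distinct elements of a field with uᵢ = ∏_{j≠i}(αᵢ - αⱼ)^{-1}, write ∏_{i=1}^n (x - αᵢ) = ∑_{i=0}^n σᵢ x^{n-i}, and define Λ_t by Λ₀ = 1 and ∑_{j=0}^t σⱼ Λ_{t-j} = 0 for t ≥ 1. Then for every 0 ≤ t ≤ n, ∑_{i=1}^n uᵢ αᵢ^{n-1+t} = Λ_t. -/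
open Polynomial

lemma stmt3_basis_coeff {F : Type*} [Field F] {n : ℕ} (α : Fin n → F) (i : Fin n) :
    (Lagrange.basis Finset.univ α i).coeff (n - 1)
      = ∏ j ∈ Finset.univ.erase i, (α i - α j)⁻¹ := by
  have hb : Lagrange.basis Finset.univ α i
      = C (∏ j ∈ Finset.univ.erase i, (α i - α j)⁻¹)
        * Lagrange.nodal (Finset.univ.erase i) α := by
    rw [Lagrange.basis, Lagrange.nodal, map_prod, ← Finset.prod_mul_distrib]
    rfl
  have hcard : (Finset.univ.erase i).card = n - 1 := by
    rw [Finset.card_erase_of_mem (Finset.mem_univ i), Finset.card_univ, Fintype.card_fin]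
  have hone : (Lagrange.nodal (Finset.univ.erase i) α).coeff (n - 1) = 1 := by
    have hd : (Lagrange.nodal (Finset.univ.erase i) α).natDegree = n - 1 := by
      rw [Lagrange.natDegree_nodal, hcard]
    rw [← hd]
    exact (Lagrange.nodal_monic).coeff_natDegree
  rw [hb, coeff_C_mul, hone, mul_one]

lemma stmt3_powsum {F : Type*} [Field F] {n : ℕ} (α : Fin n → F)
    (hα : Function.Injective α) (m : ℕ) (hm : m < n) :
    ∑ i, (∏ j ∈ Finset.univ.erase i, (α i - α j)⁻¹) * α i ^ m
      = if m = n - 1 then 1 else 0 := by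
  have hinj : Set.InjOn α ↑(Finset.univ : Finset (Fin n)) := hα.injOn
  have hdeg : ((X : F[X]) ^ m).degree < (Finset.univ : Finset (Fin n)).card := by
    rw [degree_X_pow, Finset.card_univ, Fintype.card_fin]
    exact_mod_cast hm
  have hX := Lagrange.eq_interpolate hinj hdeg
  have h2 : ((X : F[X]) ^ m).coeff (n - 1)
      = (Lagrange.interpolate Finset.univ α fun j => eval (α j) (X ^ m)).coeff (n - 1) := by
    rw [← hX]
  rw [Lagrange.interpolate_apply, finset_sum_coeff] at h2
  simp only [eval_pow, eval_X, coeff_C_mul] at h2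
  rw [coeff_X_pow] at h2
  rw [Finset.sum_congr rfl (fun i _ => by rw [stmt3_basis_coeff α i])] at h2
  rw [Finset.sum_congr rfl
    (fun i _ => mul_comm ((α i) ^ m) (∏ j ∈ Finset.univ.erase i, (α i - α j)⁻¹))] at h2
  rw [← h2]
  by_cases h : m = n - 1 <;> simp [h, eq_comm]

/-- with uᵢ = ∏_{j≠i}(αᵢ-αⱼ)⁻¹, σ the coefficients of ∏(x-αᵢ) and
Λ defined by the convolution identity, ∑ uᵢ αᵢ^{n-1+t} = Λ_t for 0 ≤ t ≤ n. -/
theorem stmt3 {F : Type*} [Field F] {n : ℕ} (hn : 1 ≤ n)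
    (α : Fin n → F) (hα : Function.Injective α)
    (u : Fin n → F)
    (hu : ∀ i, u i = ∏ j ∈ Finset.univ.erase i, (α i - α j)⁻¹)
    (σ Λ : ℕ → F)
    (hσ : ∀ i ≤ n, σ i = (∏ j, (X - C (α j))).coeff (n - i))
    (hΛ0 : Λ 0 = 1)
    (hΛ : ∀ t : ℕ, 1 ≤ t → ∑ j ∈ Finset.range (t + 1), σ j * Λ (t - j) = 0)
    (t : ℕ) (ht : t ≤ n) :
    ∑ i, u i * α i ^ (n - 1 + t) = Λ t := by
  -- power sums in terms of u
  have pow : ∀ m, m < n → ∑ i, u i * α i ^ m = if m = n - 1 then 1 else 0 := by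
    intro m hm
    rw [Finset.sum_congr rfl (fun i _ => by rw [hu i])]
    exact stmt3_powsum α hα m hm
  -- the nodal polynomial
  set P : F[X] := ∏ j, (X - C (α j)) with hP
  have hPn : P = Lagrange.nodal Finset.univ α := rfl
  have hPdeg : P.natDegree = n := by
    rw [hPn, Lagrange.natDegree_nodal, Finset.card_univ, Fintype.card_fin]
  have hσ0 : σ 0 = 1 := by
    have hPm : P.Monic := hPn ▸ Lagrange.nodal_monic
    rw [hσ 0 (Nat.zero_le n), Nat.sub_zero, ← hPdeg]
    exact hPm.coeff_natDegree
  -- each α i is a root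
  have root : ∀ i : Fin n, ∑ j ∈ Finset.range (n + 1), σ j * α i ^ (n - j) = 0 := by
    intro i
    have hev : eval (α i) P = 0 := by
      rw [hPn]; exact Lagrange.eval_nodal_at_node (Finset.mem_univ i)
    have hsum : ∑ j ∈ Finset.range (n + 1), P.coeff j * α i ^ j = 0 := by
      rw [← hev, eval_eq_sum_range, hPdeg]
    have hrefl := Finset.sum_range_reflect (fun j => P.coeff j * α i ^ j) (n + 1)
    simp only [Nat.add_sub_cancel] at hrefl
    rw [Finset.sum_congr rfl (fun j hj => by
      rw [hσ j (Nat.lt_succ_iff.mp (Finset.mem_range.mp hj))]), hrefl]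
    exact hsum
  -- main induction
  revert ht
  induction t using Nat.strong_induction_on with
  | _ t IH =>
    intro ht
    rcases Nat.eq_zero_or_pos t with rfl | htpos
    · rw [hΛ0, Nat.add_zero, pow (n - 1) (by omega), if_pos rfl]
    · -- key identity
      have key : ∑ j ∈ Finset.range (n + 1),
          σ j * ∑ i, u i * α i ^ ((t - 1) + (n - j)) = 0 := by
        simp_rw [Finset.mul_sum]
        rw [Finset.sum_comm]
        refine Finset.sum_eq_zero fun i _ => ?_
        have : ∀ j ∈ Finset.range (n + 1),
            σ j * (u i * α i ^ ((t - 1) + (n - j)))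
              = (u i * α i ^ (t - 1)) * (σ j * α i ^ (n - j)) := by
          intro j _
          rw [pow_add]; ring
        rw [Finset.sum_congr rfl this, ← Finset.mul_sum, root i, mul_zero]
      -- split off the tail Ico (t+1) (n+1), which vanishes
      rw [Finset.range_eq_Ico, ← Finset.sum_Ico_consecutive _ (Nat.zero_le (t + 1))
        (by omega : t + 1 ≤ n + 1)] at key
      have tail : ∑ j ∈ Finset.Ico (t + 1) (n + 1),
          σ j * ∑ i, u i * α i ^ ((t - 1) + (n - j)) = 0 := by
        refine Finset.sum_eq_zero fun j hj => ?_
        obtain ⟨hj1, hj2⟩ := Finset.mem_Ico.mp hj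
        rw [pow ((t - 1) + (n - j)) (by omega), if_neg (by omega), mul_zero]
      rw [tail, add_zero, ← Finset.range_eq_Ico] at key
      -- rewrite exponents in the head
      have head : ∀ j ∈ Finset.range (t + 1),
          σ j * ∑ i, u i * α i ^ ((t - 1) + (n - j))
            = σ j * ∑ i, u i * α i ^ (n - 1 + (t - j)) := by
        intro j hj
        have hj' : j ≤ t := Nat.lt_succ_iff.mp (Finset.mem_range.mp hj)
        have he : (t - 1) + (n - j) = n - 1 + (t - j) := by omega
        rw [he]
      rw [Finset.sum_congr rfl head] at key
      -- peel off j = 0 and use IH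
      rw [Finset.sum_range_succ'] at key
      have hIH : ∀ j ∈ Finset.range t,
          σ (j + 1) * ∑ i, u i * α i ^ (n - 1 + (t - (j + 1)))
            = σ (j + 1) * Λ (t - (j + 1)) := by
        intro j hj
        rw [IH (t - (j + 1)) (by omega) (by omega)]
      rw [Finset.sum_congr rfl hIH, Nat.sub_zero, hσ0, one_mul] at key
      have hL := hΛ t htpos
      rw [Finset.sum_range_succ', Nat.sub_zero, hσ0, one_mul] at hL
      linear_combination key - hL
end

section
/- Let α₁,...,αₙ be distinct elements of F_q, v₁,...,vₙ ∈ F_q*, uᵢ = ∏_{j≠i}(αᵢ - αⱼ)^{-1}, and k ≤ n/2. The generalized Reed–Solomon code GRS_k(α, v) = { (v₁f(α₁),...,vₙf(αₙ)) : deg f < k } is contained in the span of the vectors (u₁/v₁·α₁^j, ..., uₙ/vₙ·αₙ^j) for 0 ≤ j ≤ n-k-1 if there exists λ ∈ F_q* with vᵢ² = λuᵢ for all i. In particular, under this condition GRS_k(α, v) is self-orthogonal. -/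
open Polynomial

lemma lc_basisDivisor {F : Type*} [Field F] (x y : F) :
    (Lagrange.basisDivisor x y).leadingCoeff = (x - y)⁻¹ := by
  rw [Lagrange.basisDivisor, leadingCoeff_mul, leadingCoeff_C, leadingCoeff_X_sub_C, mul_one]

lemma key_sum {F : Type*} [Field F] {n : ℕ} (α : Fin n → F) (hα : Function.Injective α)
    (p : Polynomial F) (hp : p.degree < ((n - 1 : ℕ) : WithBot ℕ)) :
    ∑ i, (∏ j ∈ Finset.univ.erase i, (α i - α j)⁻¹) * p.eval (α i) = 0 := by
  rcases Nat.eq_zero_or_pos n with h0 | hn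
  · subst h0; simp
  have hinj : Set.InjOn α (Finset.univ : Finset (Fin n)) := fun a _ b _ h => hα h
  have hcard : (Finset.univ : Finset (Fin n)).card = n := by simp
  have hdeg : p.degree < ((Finset.univ : Finset (Fin n)).card : WithBot ℕ) := by
    rw [hcard]
    exact hp.trans_le (by exact_mod_cast Nat.sub_le n 1)
  have heq := Lagrange.eq_interpolate hinj hdeg
  have h1 : p.coeff (n - 1) = 0 := coeff_eq_zero_of_degree_lt hp
  have h2 := congrArg (fun q : Polynomial F => q.coeff (n - 1)) heq
  simp only [Lagrange.interpolate_apply, finset_sum_coeff, coeff_C_mul] at h2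
  have hbasis : ∀ i : Fin n, (Lagrange.basis Finset.univ α i).coeff (n - 1) =
      ∏ j ∈ Finset.univ.erase i, (α i - α j)⁻¹ := by
    intro i
    have hnd : (Lagrange.basis Finset.univ α i).natDegree = n - 1 := by
      rw [Lagrange.natDegree_basis hinj (Finset.mem_univ i), hcard]
    rw [← hnd, coeff_natDegree, Lagrange.basis, leadingCoeff_prod]
    exact Finset.prod_congr rfl fun j _ => lc_basisDivisor _ _
  rw [h1] at h2
  rw [← h2.symm]
  exact Finset.sum_congr rfl fun i _ => by rw [hbasis i, mul_comm]

/-- if vᵢ² = λ uᵢ for some λ ∈ F*, then the GRS code of dimension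
k ≤ n/2 is contained in the span of the vectors (uᵢ/vᵢ · αᵢ^j) for 0 ≤ j ≤ n-k-1;
in particular it is self-orthogonal. -/
theorem stmt13 {F : Type*} [Field F] {n k : ℕ} (hk : 2 * k ≤ n)
    (α : Fin n → F) (hα : Function.Injective α)
    (v : Fin n → F) (hv : ∀ i, v i ≠ 0)
    (u : Fin n → F)
    (hu : ∀ i, u i = ∏ j ∈ Finset.univ.erase i, (α i - α j)⁻¹)
    (hlam : ∃ l : F, l ≠ 0 ∧ ∀ i, v i ^ 2 = l * u i) :
    (∀ f : Polynomial F, f.degree < k →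
        (fun i => v i * f.eval (α i)) ∈
          Submodule.span F
            (Set.range fun j : Fin (n - k) => fun i => u i / v i * α i ^ (j : ℕ))) ∧
      (∀ f g : Polynomial F, f.degree < k → g.degree < k →
        ∑ i, (v i * f.eval (α i)) * (v i * g.eval (α i)) = 0) := by
  obtain ⟨l, hl, hlu⟩ := hlam
  constructor
  · intro f hf
    rcases eq_or_ne f 0 with rfl | hf0
    · have : (fun i => v i * (0 : Polynomial F).eval (α i)) = 0 := by
        funext i; simp
      rw [this]
      exact Submodule.zero_mem _
    have hnd : f.natDegree < k := (natDegree_lt_iff_degree_lt hf0).mpr hf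
    have hkn : k ≤ n - k := by omega
    have hnd' : f.natDegree < n - k := lt_of_lt_of_le hnd hkn
    have hexp : (fun i => v i * f.eval (α i)) =
        ∑ j : Fin (n - k), (l * f.coeff (j : ℕ)) • (fun i => u i / v i * α i ^ (j : ℕ)) := by
      funext i
      have hvi : u i / v i * l = v i := by
        rw [div_mul_eq_mul_div, mul_comm (u i) l, ← hlu i, sq, mul_div_assoc,
          div_self (hv i), mul_one]
      calc v i * f.eval (α i) = u i / v i * l * f.eval (α i) := by rw [hvi]
        _ = u i / v i * l * ∑ j ∈ Finset.range (n - k), f.coeff j * α i ^ j := by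
            rw [eval_eq_sum_range' hnd']
        _ = ∑ j : Fin (n - k), (l * f.coeff (j : ℕ)) * (u i / v i * α i ^ (j : ℕ)) := by
            rw [Finset.mul_sum,
              ← Fin.sum_univ_eq_sum_range (fun j => u i / v i * l * (f.coeff j * α i ^ j)) (n - k)]
            exact Finset.sum_congr rfl fun j _ => by ring
        _ = _ := by
            rw [Finset.sum_apply]
            exact Finset.sum_congr rfl fun j _ => by simp [Pi.smul_apply, smul_eq_mul]
    rw [hexp]
    exact Submodule.sum_mem _ fun j _ =>
      Submodule.smul_mem _ _ (Submodule.subset_span ⟨j, rfl⟩)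
  · intro f g hf hg
    rcases eq_or_ne f 0 with rfl | hf0
    · simp
    rcases eq_or_ne g 0 with rfl | hg0
    · simp
    have hndf : f.natDegree < k := (natDegree_lt_iff_degree_lt hf0).mpr hf
    have hndg : g.natDegree < k := (natDegree_lt_iff_degree_lt hg0).mpr hg
    have hfg : (f * g).degree < ((n - 1 : ℕ) : WithBot ℕ) := by
      have h1 : (f * g).natDegree = f.natDegree + g.natDegree := natDegree_mul hf0 hg0
      have h2 : (f * g).natDegree < n - 1 := by omega
      exact (natDegree_lt_iff_degree_lt (mul_ne_zero hf0 hg0)).mp h2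
    have hkey := key_sum α hα (f * g) hfg
    calc ∑ i, (v i * f.eval (α i)) * (v i * g.eval (α i))
        = ∑ i, l * ((∏ j ∈ Finset.univ.erase i, (α i - α j)⁻¹) * (f * g).eval (α i)) := by
          refine Finset.sum_congr rfl fun i _ => ?_
          rw [← hu i, eval_mul,
            show v i * f.eval (α i) * (v i * g.eval (α i))
              = v i ^ 2 * (f.eval (α i) * g.eval (α i)) by ring, hlu i]
          ring
      _ = l * ∑ i, (∏ j ∈ Finset.univ.erase i, (α i - α j)⁻¹) * (f * g).eval (α i) := by
          rw [Finset.mul_sum]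
      _ = 0 := by rw [hkey, mul_zero]
end

section
/- Let q = 2^h with s | h and s ≥ 2, let α₁,...,α_{2^s} enumerate F_{2^s} ⊆ F_q, let vᵢ = ∏_{j≠i}(αᵢ - αⱼ)^{-2^{h-1}}, and let η₁₁, η₁₂, η₂₁, η₂₂ ∈ F_q satisfy η₁₁η₂₂ = η₁₂η₂₁. Set k = 2^{s-1} - 1 and let C be the evaluation code { (v₁f(α₁),...,v_{2^s}f(α_{2^s})) : f ∈ S } where S = { ∑_{i=0}^{k-1} fᵢ xⁱ + ∑_{i=1}^{2} f_{k-2+i} ∑_{j=1}^{2} η_{ij} x^{k-1+j} }. Then C is a self-orthogonal [2^s, 2^{s-1}-1] code over F_q with minimum distance at least 2^{s-1}. -/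
open Finset

/-- Evaluation map of the twisted generalized Reed-Solomon code of Theorem 6
(dimension k = 2^{s-1} - 1, two twists with coefficient matrix (η_{ij})):
a coefficient vector f is sent to the word
( vᵢ·( ∑_{t<k} f_t αᵢ^t + f_{k-2}(η₁₁ αᵢ^k + η₁₂ αᵢ^{k+1})
       + f_{k-1}(η₂₁ αᵢ^k + η₂₂ αᵢ^{k+1}) ) )ᵢ,
where k = 2^{s-1} - 1, so k-2 = 2^{s-1}-3, k-1 = 2^{s-1}-2, k = 2^{s-1}-1,
k+1 = 2^{s-1}. -/
def tgrsEv {F : Type*} [Field F] (s : ℕ) (α v : Fin (2 ^ s) → F)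
    (η11 η12 η21 η22 : F) (f : ℕ → F) : Fin (2 ^ s) → F :=
  fun i => v i *
    ((∑ t ∈ Finset.range (2 ^ (s - 1) - 1), f t * α i ^ t)
      + f (2 ^ (s - 1) - 3) * (η11 * α i ^ (2 ^ (s - 1) - 1) + η12 * α i ^ (2 ^ (s - 1)))
      + f (2 ^ (s - 1) - 2) * (η21 * α i ^ (2 ^ (s - 1) - 1) + η22 * α i ^ (2 ^ (s - 1))))

/-- The polynomial whose evaluations give the TGRS codeword. -/
noncomputable def tpolyAux {F : Type*} [Field F] (m : ℕ) (η11 η12 η21 η22 : F) (f : ℕ → F) :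
    Polynomial F :=
  (∑ t ∈ Finset.range (m - 1), Polynomial.C (f t) * Polynomial.X ^ t)
    + Polynomial.C (f (m - 3) * η11 + f (m - 2) * η21) * Polynomial.X ^ (m - 1)
    + Polynomial.C (f (m - 3) * η12 + f (m - 2) * η22) * Polynomial.X ^ m

lemma tpolyAux_eval {F : Type*} [Field F] (m : ℕ) (η11 η12 η21 η22 : F) (f : ℕ → F) (x : F) :
    (tpolyAux m η11 η12 η21 η22 f).eval x =
      (∑ t ∈ Finset.range (m - 1), f t * x ^ t)
        + f (m - 3) * (η11 * x ^ (m - 1) + η12 * x ^ m)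
        + f (m - 2) * (η21 * x ^ (m - 1) + η22 * x ^ m) := by
  simp [tpolyAux, Polynomial.eval_finset_sum]
  ring

lemma tpolyAux_natDegree_le {F : Type*} [Field F] (m : ℕ) (η11 η12 η21 η22 : F) (f : ℕ → F) :
    (tpolyAux m η11 η12 η21 η22 f).natDegree ≤ m := by
  refine (Polynomial.natDegree_add_le _ _).trans (max_le ((Polynomial.natDegree_add_le _ _).trans
    (max_le ?_ ?_)) ?_)
  · refine Polynomial.natDegree_sum_le_of_forall_le _ _ fun t ht => ?_
    refine (Polynomial.natDegree_C_mul_X_pow_le _ _).trans ?_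
    have := Finset.mem_range.mp ht
    omega
  · exact (Polynomial.natDegree_C_mul_X_pow_le _ _).trans (Nat.sub_le _ _)
  · exact Polynomial.natDegree_C_mul_X_pow_le _ _

lemma sum_coeff_aux {F : Type*} [Field F] (m : ℕ) (f : ℕ → F) (n : ℕ) :
    (∑ t ∈ Finset.range (m - 1), Polynomial.C (f t) * Polynomial.X ^ t).coeff n =
      if n ∈ Finset.range (m - 1) then f n else 0 := by
  rw [Polynomial.finset_sum_coeff]
  simp_rw [Polynomial.coeff_C_mul, Polynomial.coeff_X_pow, mul_ite, mul_one, mul_zero]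
  exact Finset.sum_ite_eq _ _ _

lemma tpolyAux_coeff_lt {F : Type*} [Field F] (m : ℕ) (η11 η12 η21 η22 : F) (f : ℕ → F)
    {n : ℕ} (hn : n < m - 1) :
    (tpolyAux m η11 η12 η21 η22 f).coeff n = f n := by
  have h1 : n ≠ m - 1 := by omega
  have h2 : n ≠ m := by omega
  simp only [tpolyAux, Polynomial.coeff_add, sum_coeff_aux, Polynomial.coeff_C_mul,
    Polynomial.coeff_X_pow, Finset.mem_range]
  simp [hn, h1, h2]

lemma tpolyAux_coeff_k {F : Type*} [Field F] (m : ℕ) (η11 η12 η21 η22 : F) (f : ℕ → F)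
    (hm : 1 ≤ m) :
    (tpolyAux m η11 η12 η21 η22 f).coeff (m - 1) = f (m - 3) * η11 + f (m - 2) * η21 := by
  have h2 : m - 1 ≠ m := by omega
  simp only [tpolyAux, Polynomial.coeff_add, sum_coeff_aux, Polynomial.coeff_C_mul,
    Polynomial.coeff_X_pow, Finset.mem_range]
  simp [h2]

lemma tpolyAux_coeff_m {F : Type*} [Field F] (m : ℕ) (η11 η12 η21 η22 : F) (f : ℕ → F)
    (hm : 1 ≤ m) :
    (tpolyAux m η11 η12 η21 η22 f).coeff m = f (m - 3) * η12 + f (m - 2) * η22 := by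
  have h1 : ¬ (m < m - 1) := by omega
  have h2 : m ≠ m - 1 := by omega
  simp only [tpolyAux, Polynomial.coeff_add, sum_coeff_aux, Polynomial.coeff_C_mul,
    Polynomial.coeff_X_pow, Finset.mem_range]
  simp [h1, h2]

/-- for q = 2^h, s ∣ h, s ≥ 2, α enumerating the subfield F_{2^s},
vᵢ = ∏_{j≠i}(αᵢ-αⱼ)^{-2^{h-1}}, and η₁₁η₂₂ = η₁₂η₂₁, the TGRS code C is
self-orthogonal of length 2^s, dimension 2^{s-1}-1, and minimum distance ≥ 2^{s-1}. -/
theorem stmt14 {F : Type*} [Field F] [Fintype F] [DecidableEq F]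
    (h s : ℕ) (hs : 2 ≤ s) (hdvd : s ∣ h)
    (hcard : Fintype.card F = 2 ^ h)
    (K : Subfield F) (hK : Nat.card K = 2 ^ s)
    (α : Fin (2 ^ s) → F) (hinj : Function.Injective α) (hmem : ∀ i, α i ∈ K)
    (v : Fin (2 ^ s) → F)
    (hv : ∀ i, v i = ∏ j ∈ Finset.univ.erase i, ((α i - α j) ^ (2 ^ (h - 1)))⁻¹)
    (η11 η12 η21 η22 : F) (hη : η11 * η22 = η12 * η21) :
    (∀ f g : ℕ → F,
        ∑ i, tgrsEv s α v η11 η12 η21 η22 f i * tgrsEv s α v η11 η12 η21 η22 g i = 0) ∧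
      Module.finrank F
          (Submodule.span F (Set.range (tgrsEv s α v η11 η12 η21 η22))) = 2 ^ (s - 1) - 1 ∧
      (∀ f : ℕ → F, tgrsEv s α v η11 η12 η21 η22 f ≠ 0 →
        2 ^ (s - 1) ≤
          (Finset.univ.filter fun i => tgrsEv s α v η11 η12 η21 η22 f i ≠ 0).card) := by
  classical
  set m := 2 ^ (s - 1) with hm
  have hm2 : 2 ≤ m := by
    rw [hm]
    calc 2 = 2 ^ 1 := by norm_num
    _ ≤ 2 ^ (s - 1) := Nat.pow_le_pow_right (by norm_num) (by omega)
  have h2s : 2 ^ s = 2 * m := by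
    rw [hm, ← pow_succ']
    congr 1
    omega
  -- characteristic 2
  have hchar : ringChar F = 2 := by
    obtain ⟨n, hp, hc⟩ := FiniteField.card F (ringChar F)
    rw [hcard] at hc
    have hdvd2 : ringChar F ∣ 2 := hp.dvd_of_dvd_pow (n := h)
      (hc ▸ dvd_pow_self (ringChar F) n.pos.ne')
    exact (Nat.prime_dvd_prime_iff_eq hp Nat.prime_two).mp hdvd2
  haveI hC2 : CharP F 2 := hchar ▸ ringChar.charP F
  have h2 : (2 : F) = 0 := CharTwo.two_eq_zero
  -- the subfield as a fintype
  haveI : Fintype K := Fintype.ofFinite K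
  have hKcard : Fintype.card K = 2 ^ s := by rw [← Nat.card_eq_fintype_card, hK]
  set β : Fin (2 ^ s) → K := fun i => ⟨α i, hmem i⟩ with hβ
  have hβinj : Function.Injective β := fun i j hij => hinj (congrArg Subtype.val hij)
  have hβbij : Function.Bijective β :=
    (Fintype.bijective_iff_injective_and_card β).2 ⟨hβinj, by simp [hKcard]⟩
  -- power sums vanish
  have hpow : ∀ t : ℕ, t ≤ 2 ^ s → t ≠ 2 ^ s - 1 → ∑ i, α i ^ t = 0 := by
    intro t ht hne
    have hcast : ∑ i, α i ^ t = ((∑ x : K, x ^ t : K) : F) := by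
      push_cast
      exact Fintype.sum_bijective β hβbij _ _ (fun i => by simp [hβ])
    rw [hcast]
    rcases eq_or_lt_of_le ht with hteq | htlt
    · have hx : ∀ x : K, x ^ t = x ^ 1 := by
        intro x
        rw [hteq, pow_one, ← hKcard, FiniteField.pow_card]
      have hc1 : (1 : ℕ) < Fintype.card K - 1 := by rw [hKcard, h2s]; omega
      rw [Finset.sum_congr rfl fun x _ => hx x,
        FiniteField.sum_pow_lt_card_sub_one (K := ↥K) 1 hc1]
      simp
    · have hct : t < Fintype.card K - 1 := by
        rw [hKcard]
        exact lt_of_le_of_ne (Nat.le_sub_one_of_lt htlt) hne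
      rw [FiniteField.sum_pow_lt_card_sub_one (K := ↥K) t hct]
      simp
  -- the product of all differences is 1
  have hKneg : (-1 : K) = 1 := by
    apply Subtype.coe_injective
    push_cast
    exact CharTwo.neg_eq 1
  have hprodK : ∏ y ∈ (Finset.univ : Finset K).erase 0, y = 1 := by
    have hu := FiniteField.prod_univ_units_id_eq_neg_one (K := ↥K)
    have hinjU : Function.Injective (fun u : Kˣ => (u : K)) := fun a b hab => Units.ext hab
    have himg : (Finset.univ : Finset Kˣ).image (fun u : Kˣ => (u : K)) =
        (Finset.univ : Finset K).erase 0 := by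
      ext y
      simp only [Finset.mem_image, Finset.mem_univ, true_and, Finset.mem_erase, and_true]
      constructor
      · rintro ⟨u, rfl⟩; exact u.ne_zero
      · intro hy; exact ⟨Units.mk0 y hy, rfl⟩
    calc ∏ y ∈ (Finset.univ : Finset K).erase 0, y
        = ∏ u : Kˣ, (u : K) := by
          rw [← himg, Finset.prod_image (fun a _ b _ hab => hinjU hab)]
    _ = ((∏ u : Kˣ, u : Kˣ) : K) := (map_prod (Units.coeHom K) _ _).symm
    _ = ((-1 : Kˣ) : K) := by rw [hu]
    _ = 1 := by rw [Units.val_neg, Units.val_one, hKneg]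
  have hprod1 : ∀ i, ∏ j ∈ Finset.univ.erase i, (α i - α j) = 1 := by
    intro i
    set γ : Fin (2 ^ s) → K := fun j => β i - β j with hγ
    have hγinj : Function.Injective γ := fun a b hab => hβinj (sub_right_injective hab)
    have hγsurj : Function.Surjective γ :=
      ((Fintype.bijective_iff_injective_and_card γ).2 ⟨hγinj, by simp [hKcard]⟩).2
    have h1 : ∏ j ∈ Finset.univ.erase i, (α i - α j) =
        ((∏ j ∈ Finset.univ.erase i, γ j : K) : F) := by
      push_cast
      exact Finset.prod_congr rfl (fun j _ => by simp [hγ, hβ])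
    rw [h1]
    have h3 : ∏ j ∈ Finset.univ.erase i, γ j = ∏ y ∈ (Finset.univ : Finset K).erase 0, y := by
      rw [← Finset.prod_image (g := γ) (f := fun y => y) (fun a _ b _ hab => hγinj hab),
        Finset.image_erase hγinj, Finset.image_univ_of_surjective hγsurj]
      have : γ i = 0 := by simp [hγ]
      rw [this]
    rw [h3, hprodK]
    push_cast
    rfl
  -- the multiplier vector is constantly 1
  have hv1 : ∀ i, v i = 1 := by
    intro i
    rw [hv i]
    calc ∏ j ∈ Finset.univ.erase i, ((α i - α j) ^ 2 ^ (h - 1))⁻¹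
        = ((∏ j ∈ Finset.univ.erase i, (α i - α j)) ^ 2 ^ (h - 1))⁻¹ := by
          rw [← Finset.prod_pow, Finset.prod_inv_distrib]
    _ = 1 := by rw [hprod1 i, one_pow, inv_one]
  -- codeword entries are polynomial evaluations
  have hev : ∀ f i, tgrsEv s α v η11 η12 η21 η22 f i =
      (tpolyAux m η11 η12 η21 η22 f).eval (α i) := by
    intro f i
    rw [tpolyAux_eval]
    simp only [tgrsEv, ← hm, hv1 i, one_mul]
  refine ⟨?_, ?_, ?_⟩
  · -- self-orthogonality
    intro f g
    have hPf := tpolyAux_natDegree_le m η11 η12 η21 η22 f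
    have hPg := tpolyAux_natDegree_le m η11 η12 η21 η22 g
    set Pf := tpolyAux m η11 η12 η21 η22 f with hPfd
    set Pg := tpolyAux m η11 η12 η21 η22 g with hPgd
    have hQdeg : (Pf * Pg).natDegree ≤ 2 * m :=
      (Polynomial.natDegree_mul_le).trans (by omega)
    have hQc : (Pf * Pg).coeff (2 * m - 1) = 0 := by
      rw [Polynomial.coeff_mul, Finset.Nat.sum_antidiagonal_eq_sum_range_succ_mk]
      have hsub : ({m - 1, m} : Finset ℕ) ⊆ Finset.range (2 * m - 1 + 1) := by
        intro x hx
        simp only [Finset.mem_insert, Finset.mem_singleton] at hx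
        rw [Finset.mem_range]
        rcases hx with rfl | rfl <;> omega
      have hz : ∀ u ∈ Finset.range (2 * m - 1 + 1), u ∉ ({m - 1, m} : Finset ℕ) →
          Pf.coeff u * Pg.coeff (2 * m - 1 - u) = 0 := by
        intro u _ hnot
        simp only [Finset.mem_insert, Finset.mem_singleton, not_or] at hnot
        rcases lt_or_ge u (m - 1) with hlt | hge
        · have hgt : m < 2 * m - 1 - u := by omega
          rw [Polynomial.coeff_eq_zero_of_natDegree_lt (lt_of_le_of_lt hPg hgt), mul_zero]
        · have hgt : m < u := by omega
          rw [Polynomial.coeff_eq_zero_of_natDegree_lt (lt_of_le_of_lt hPf hgt), zero_mul]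
      rw [← Finset.sum_subset hsub hz, Finset.sum_pair (by omega : m - 1 ≠ m)]
      have e1 : 2 * m - 1 - (m - 1) = m := by omega
      have e2 : 2 * m - 1 - m = m - 1 := by omega
      rw [e1, e2, hPfd, hPgd, tpolyAux_coeff_k m _ _ _ _ f (by omega),
        tpolyAux_coeff_m m _ _ _ _ g (by omega), tpolyAux_coeff_m m _ _ _ _ f (by omega),
        tpolyAux_coeff_k m _ _ _ _ g (by omega)]
      linear_combination (f (m - 3) * g (m - 2) + f (m - 2) * g (m - 3)) * hη
        + (f (m - 3) * g (m - 3) * η11 * η12 + f (m - 2) * g (m - 2) * η21 * η22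
          + f (m - 3) * g (m - 2) * η12 * η21 + f (m - 2) * g (m - 3) * η12 * η21) * h2
    calc ∑ i, tgrsEv s α v η11 η12 η21 η22 f i * tgrsEv s α v η11 η12 η21 η22 g i
        = ∑ i, (Pf * Pg).eval (α i) := by
          refine Finset.sum_congr rfl fun i _ => ?_
          rw [hev f i, hev g i, ← Polynomial.eval_mul]
    _ = ∑ i, ∑ t ∈ Finset.range (2 * m + 1), (Pf * Pg).coeff t * α i ^ t := by
          refine Finset.sum_congr rfl fun i _ => ?_
          exact Polynomial.eval_eq_sum_range' (by omega) _
    _ = ∑ t ∈ Finset.range (2 * m + 1), (Pf * Pg).coeff t * ∑ i, α i ^ t := by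
          rw [Finset.sum_comm]
          exact Finset.sum_congr rfl fun t _ => (Finset.mul_sum _ _ _).symm
    _ = 0 := by
          refine Finset.sum_eq_zero fun t ht => ?_
          rcases eq_or_ne t (2 * m - 1) with rfl | hne
          · rw [hQc, zero_mul]
          · rw [hpow t (by rw [h2s]; exact Nat.lt_succ_iff.mp (Finset.mem_range.mp ht))
              (by rw [h2s]; exact hne), mul_zero]
  · -- dimension
    have hdep : ∀ f g : ℕ → F, (∀ t, t < m - 1 → f t = g t) →
        tgrsEv s α v η11 η12 η21 η22 f = tgrsEv s α v η11 η12 η21 η22 g := by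
      intro f g hfg
      funext i
      simp only [tgrsEv, ← hm]
      rw [hfg (m - 3) (by omega), hfg (m - 2) (by omega),
        Finset.sum_congr rfl fun t ht => by rw [hfg t (Finset.mem_range.mp ht)]]
    have hadd : ∀ f g : ℕ → F,
        tgrsEv s α v η11 η12 η21 η22 (fun t => f t + g t) =
          tgrsEv s α v η11 η12 η21 η22 f + tgrsEv s α v η11 η12 η21 η22 g := by
      intro f g
      funext i
      simp only [tgrsEv, ← hm, Pi.add_apply, add_mul, Finset.sum_add_distrib]
      ring
    have hsmul : ∀ (c : F) (f : ℕ → F),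
        tgrsEv s α v η11 η12 η21 η22 (fun t => c * f t) =
          c • tgrsEv s α v η11 η12 η21 η22 f := by
      intro c f
      funext i
      simp only [tgrsEv, ← hm, Pi.smul_apply, smul_eq_mul]
      have hsum : ∑ t ∈ Finset.range (m - 1), (c * f t) * α i ^ t =
          c * ∑ t ∈ Finset.range (m - 1), f t * α i ^ t := by
        rw [Finset.mul_sum]
        exact Finset.sum_congr rfl fun t _ => by ring
      rw [hsum]
      ring
    have hker : ∀ f : ℕ → F, tgrsEv s α v η11 η12 η21 η22 f = 0 → ∀ t, t < m - 1 → f t = 0 := by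
      intro f hf t ht
      have hP : tpolyAux m η11 η12 η21 η22 f = 0 := by
        refine Polynomial.eq_zero_of_natDegree_lt_card_of_eval_eq_zero _ hinj
          (fun i => ?_) ?_
        · rw [← hev f i]
          exact congrFun hf i
        · rw [Fintype.card_fin, h2s]
          have := tpolyAux_natDegree_le m η11 η12 η21 η22 f
          omega
      rw [← tpolyAux_coeff_lt m η11 η12 η21 η22 f ht, hP, Polynomial.coeff_zero]
    let L : (Fin (m - 1) → F) →ₗ[F] (Fin (2 ^ s) → F) :=
      { toFun := fun g =>
          tgrsEv s α v η11 η12 η21 η22 (fun t => if ht : t < m - 1 then g ⟨t, ht⟩ else 0)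
        map_add' := by
          intro g g'
          rw [← hadd]
          exact congrArg (tgrsEv s α v η11 η12 η21 η22)
            (funext fun t => by by_cases ht : t < m - 1 <;> simp [ht])
        map_smul' := by
          intro c g
          rw [RingHom.id_apply, ← hsmul]
          exact congrArg (tgrsEv s α v η11 η12 η21 η22)
            (funext fun t => by by_cases ht : t < m - 1 <;> simp [ht]) }
    have hrange : Set.range (tgrsEv s α v η11 η12 η21 η22) = Set.range ⇑L := by
      ext w
      constructor
      · rintro ⟨f, rfl⟩
        refine ⟨fun t => f t.val, ?_⟩
        show tgrsEv s α v η11 η12 η21 η22 _ = _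
        exact hdep _ _ fun t ht => by simp [ht]
      · rintro ⟨g, rfl⟩
        exact ⟨_, rfl⟩
    have hLinj : Function.Injective L := by
      rw [← LinearMap.ker_eq_bot, LinearMap.ker_eq_bot']
      intro g hg
      funext t
      have h0 := hker _ hg t.val t.isLt
      simpa using h0
    rw [hrange, ← LinearMap.coe_range, Submodule.span_eq, LinearMap.finrank_range_of_inj hLinj]
    simp
  · -- minimum distance
    intro f hf
    have hp0 : tpolyAux m η11 η12 η21 η22 f ≠ 0 := by
      intro h0
      apply hf
      funext i
      rw [hev f i, h0, Polynomial.eval_zero]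
      rfl
    set Z := Finset.univ.filter (fun i => tgrsEv s α v η11 η12 η21 η22 f i = 0) with hZ
    have hZcard : Z.card ≤ m := by
      have hmap : ∀ i ∈ Z, α i ∈ (tpolyAux m η11 η12 η21 η22 f).roots.toFinset := by
        intro i hi
        rw [Multiset.mem_toFinset, Polynomial.mem_roots hp0]
        rw [hZ, Finset.mem_filter] at hi
        rw [Polynomial.IsRoot.def, ← hev f i]
        exact hi.2
      calc Z.card ≤ (tpolyAux m η11 η12 η21 η22 f).roots.toFinset.card :=
          Finset.card_le_card_of_injOn α hmap (fun a _ b _ hab => hinj hab)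
      _ ≤ Multiset.card (tpolyAux m η11 η12 η21 η22 f).roots := Multiset.toFinset_card_le _
      _ ≤ (tpolyAux m η11 η12 η21 η22 f).natDegree := Polynomial.card_roots' _
      _ ≤ m := tpolyAux_natDegree_le m η11 η12 η21 η22 f
    have hsplit := Finset.card_filter_add_card_filter_not
      (s := (Finset.univ : Finset (Fin (2 ^ s))))
      (p := fun i => tgrsEv s α v η11 η12 η21 η22 f i ≠ 0)
    have hnegZ : (Finset.univ.filter fun i => ¬ tgrsEv s α v η11 η12 η21 η22 f i ≠ 0) = Z := by
      rw [hZ]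
      simp [not_not]
    rw [hnegZ, Finset.card_univ, Fintype.card_fin] at hsplit
    have hsplit' : (Finset.univ.filter fun i => tgrsEv s α v η11 η12 η21 η22 f i ≠ 0).card
        + Z.card = 2 * m := by rw [← h2s]; exact hsplit
    omega
end

section
/- Let F be a field, n = 2k, α₁,...,αₙ distinct in F with ∏(x - αᵢ) = ∑ σᵢ x^{n-i}, v₁,...,vₙ ∈ F* with vᵢ² = λuᵢ for some λ ∈ F* where uᵢ = ∏_{j≠i}(αᵢ-αⱼ)^{-1}. Let η₁,...,η_k ∈ F with η_k ≠ 0 satisfy η_{k-i} = η_k σᵢ for 1 ≤ i ≤ k-1 and η_k σ_{n-1} = 2. Then the code C₂ with generator matrix whose first row is (vᵢ(1 + ∑_{t=1}^{k} η_t αᵢ^{k-1+t}))ᵢ and remaining rows (vᵢ αᵢ^j)ᵢ for 1 ≤ j ≤ k-1, is self-dual: C₂ = C₂^⊥. -/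
open Polynomial

/-- The Euclidean dual of a code `C ⊆ F^n` with respect to the standard bilinear
form `∑ xᵢ yᵢ`. -/
def dualCode {F : Type*} [Field F] {n : ℕ} (Code : Submodule F (Fin n → F)) :
    Submodule F (Fin n → F) where
  carrier := {x | ∀ c ∈ Code, ∑ i, x i * c i = 0}
  add_mem' := by
    intro a b ha hb c hc
    simp only [Pi.add_apply, add_mul, Finset.sum_add_distrib, ha c hc, hb c hc, add_zero]
  zero_mem' := by
    intro c hc
    simp
  smul_mem' := by
    intro r x hx c hc
    simp only [Pi.smul_apply, smul_eq_mul, mul_assoc, ← Finset.mul_sum, hx c hc, mul_zero]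

lemma stmt15_coeff_lagrangeBasis {F : Type*} [Field F] {n : ℕ} (α : Fin n → F)
    (hα : Function.Injective α) (i : Fin n) :
    (Lagrange.basis Finset.univ α i).coeff (n - 1) = ∏ j ∈ Finset.univ.erase i, (α i - α j)⁻¹ := by
  have hinj : Set.InjOn α (Finset.univ : Finset (Fin n)) := hα.injOn
  have hd := Lagrange.natDegree_basis hinj (Finset.mem_univ i)
  rw [show ((n : ℕ) - 1) = (Lagrange.basis Finset.univ α i).natDegree from by
    rw [hd]; simp]
  rw [Polynomial.coeff_natDegree]
  have hb : Lagrange.basis Finset.univ α i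
      = ∏ j ∈ Finset.univ.erase i, Lagrange.basisDivisor (α i) (α j) := rfl
  rw [hb, Polynomial.leadingCoeff_prod]
  refine Finset.prod_congr rfl fun j hj => ?_
  have hne : α i ≠ α j := by
    intro h
    exact (Finset.mem_erase.mp hj).1 (hα h).symm
  rw [Lagrange.basisDivisor, Polynomial.leadingCoeff_mul, Polynomial.leadingCoeff_C,
    Polynomial.leadingCoeff_X_sub_C, mul_one]

lemma stmt15_sum_mul_eval {F : Type*} [Field F] {n : ℕ} (α : Fin n → F)
    (hα : Function.Injective α) (f : F[X]) (hf : f.degree < n) :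
    ∑ i, (∏ j ∈ Finset.univ.erase i, (α i - α j)⁻¹) * f.eval (α i) = f.coeff (n - 1) := by
  have hinj : Set.InjOn α (Finset.univ : Finset (Fin n)) := hα.injOn
  have hfi := Lagrange.eq_interpolate (f := f) hinj (by simpa using hf)
  conv_rhs => rw [hfi]
  rw [Lagrange.interpolate_apply, Polynomial.finset_sum_coeff]
  refine Finset.sum_congr rfl fun j _ => ?_
  rw [Polynomial.coeff_C_mul, stmt15_coeff_lagrangeBasis α hα, mul_comm]

lemma stmt15_endgame {F : Type*} [Field F] {n k : ℕ} (G : Fin k → Fin n → F)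
    (hGG : ∀ j j', ∑ i, G j i * G j' i = 0)
    (hli : LinearIndependent F G) (hnk : n = 2*k) :
    Submodule.span F (Set.range G) = dualCode (Submodule.span F (Set.range G)) := by
  set S := Submodule.span F (Set.range G) with hSdef
  have hmem : ∀ x, x ∈ dualCode S ↔ ∀ c ∈ S, ∑ i, x i * c i = 0 := fun x => Iff.rfl
  have hle : S ≤ dualCode S := by
    rw [hSdef, Submodule.span_le]
    rintro _ ⟨j, rfl⟩
    rw [SetLike.mem_coe, hmem]
    intro c hc
    induction hc using Submodule.span_induction with
    | mem c hc => obtain ⟨j', rfl⟩ := hc; exact hGG j j'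
    | zero => simp
    | add a b _ _ ha hb =>
        simp only [Pi.add_apply, mul_add, Finset.sum_add_distrib, ha, hb, add_zero]
    | smul t a _ ha =>
        simp only [Pi.smul_apply, smul_eq_mul, mul_left_comm _ t, ← Finset.mul_sum, ha, mul_zero]
  have he : ∀ x y : Fin n → F, ((Pi.basisFun F (Fin n)).toDual x) y = ∑ i, y i * x i := by
    intro x y
    conv_lhs => rw [show y = ∑ i, y i • (Pi.basisFun F (Fin n)) i from by
      ext j; simp [Pi.single_apply]]
    rw [map_sum]
    refine Finset.sum_congr rfl fun i _ => ?_
    rw [map_smul, Module.Basis.toDual_apply_left, Pi.basisFun_repr, smul_eq_mul]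
  have hdc : dualCode S = Submodule.comap
      ((Pi.basisFun F (Fin n)).toDualEquiv : (Fin n → F) →ₗ[F] Module.Dual F (Fin n → F))
      (Submodule.dualAnnihilator S) := by
    ext x
    rw [hmem, Submodule.mem_comap]
    rw [Submodule.mem_dualAnnihilator]
    constructor
    · intro h w hw
      rw [LinearEquiv.coe_coe, Module.Basis.toDualEquiv_apply, he]
      simpa only [mul_comm] using h w hw
    · intro h c hc
      have := h c hc
      rw [LinearEquiv.coe_coe, Module.Basis.toDualEquiv_apply, he] at this
      simpa only [mul_comm] using this
  have hfr1 : Module.finrank F S = k := by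
    rw [hSdef, finrank_span_eq_card hli, Fintype.card_fin]
  have hfr2 : Module.finrank F (dualCode S) = k := by
    rw [hdc, Submodule.comap_equiv_eq_map_symm,
      LinearEquiv.finrank_map_eq (Pi.basisFun F (Fin n)).toDualEquiv.symm
        (Submodule.dualAnnihilator S)]
    have h3 := LinearEquiv.finrank_eq (R := F) (M := (Fin n → F) ⧸ S)
      (N := Submodule.dualAnnihilator S) (Subspace.quotEquivAnnihilator S)
    have h4 := Submodule.finrank_quotient_add_finrank S
    have h5 : Module.finrank F (Fin n → F) = n := Module.finrank_fin_fun F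
    omega
  exact Submodule.eq_of_le_of_finrank_le hle (by omega)

lemma stmt15_li {F : Type*} [Field F] {k : ℕ} (hk : 1 ≤ k)
    (α : Fin (2*k) → F) (hα : Function.Injective α) (v : Fin (2*k) → F) (hv : ∀ i, v i ≠ 0)
    (η : ℕ → F) (hηk : η k ≠ 0) (E W : F[X])
    (hEW : E = 1 + C (η k) * W)
    (hWdeg : W.natDegree ≤ 2*k-1) (hWcoeff : W.coeff (2*k-1) = 1)
    (hEdef : E = 1 + ∑ t ∈ Finset.Icc 1 k, C (η t) * X^(k - 1 + t))
    (G : Fin k → Fin (2*k) → F)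
    (hGf : ∀ j i, G j i = v i * (if (j:ℕ) = 0 then E else X^(j:ℕ)).eval (α i)) :
    LinearIndependent F G := by
  have hEdeg : E.natDegree ≤ 2*k-1 := by
    rw [hEW]
    refine le_trans (natDegree_add_le _ _) (max_le (by simp) ?_)
    exact le_trans (natDegree_C_mul_le _ _) hWdeg
  have hEc1 : E.coeff (2*k-1) = η k := by
    rw [hEW, coeff_add, coeff_C_mul, hWcoeff, coeff_one, if_neg (by omega)]
    ring
  have hEcm : ∀ m : ℕ, 1 ≤ m → m ≤ k-1 → E.coeff m = 0 := by
    intro m h1 h2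
    rw [hEdef, coeff_add, coeff_one, if_neg (by omega), finset_sum_coeff,
      Finset.sum_eq_zero, add_zero]
    intro t ht
    have := Finset.mem_Icc.mp ht
    rw [coeff_C_mul, coeff_X_pow, if_neg (by omega), mul_zero]
  rw [Fintype.linearIndependent_iff]
  intro c hc
  set f : F[X] := ∑ j : Fin k, C (c j) * (if (j:ℕ) = 0 then E else X^(j:ℕ)) with hfdef
  have hfeval : ∀ i, f.eval (α i) = 0 := by
    intro i
    have h1 : ∑ j, c j * G j i = v i * f.eval (α i) := by
      rw [hfdef, eval_finset_sum, Finset.mul_sum]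
      refine Finset.sum_congr rfl fun j _ => ?_
      rw [hGf, eval_mul, eval_C]
      ring
    have h2 : ∑ j, c j * G j i = 0 := by
      have := congrFun hc i
      simpa [Finset.sum_apply] using this
    rcases mul_eq_zero.mp (h1 ▸ h2) with h | h
    · exact absurd h (hv i)
    · exact h
  have hfdeg : f.natDegree ≤ 2*k-1 := by
    refine Polynomial.natDegree_sum_le_of_forall_le _ _ fun j _ => ?_
    refine le_trans (natDegree_C_mul_le _ _) ?_
    split
    · exact hEdeg
    · rw [natDegree_X_pow]; have := j.isLt; omega
  have hf0 : f = 0 :=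
    Polynomial.eq_zero_of_natDegree_lt_card_of_eval_eq_zero f hα hfeval
      (by rw [Fintype.card_fin]; omega)
  have hcoef : ∀ m, (∑ j : Fin k, c j * (if (j:ℕ) = 0 then E else X^(j:ℕ)).coeff m) = 0 := by
    intro m
    have : f.coeff m = ∑ j : Fin k, c j * (if (j:ℕ) = 0 then E else X^(j:ℕ)).coeff m := by
      rw [hfdef, finset_sum_coeff]
      exact Finset.sum_congr rfl fun _ _ => coeff_C_mul _
    rw [← this, hf0, coeff_zero]
  have hc0 : ∀ j : Fin k, (j:ℕ) = 0 → c j = 0 := by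
    intro j hj
    have h := hcoef (2*k-1)
    rw [Finset.sum_eq_single j] at h
    · rw [if_pos hj, hEc1] at h
      exact (mul_eq_zero.mp h).resolve_right hηk
    · intro j' _ hne
      have hj' : (j':ℕ) ≠ 0 := by
        intro h0
        exact hne (Fin.ext (by omega))
      rw [if_neg hj', coeff_X_pow, if_neg (by have := j'.isLt; omega), mul_zero]
    · intro h; exact absurd (Finset.mem_univ j) h
  intro j
  rcases eq_or_ne ((j:ℕ)) 0 with hj | hj
  · exact hc0 j hj
  · have h := hcoef (j:ℕ)
    rw [Finset.sum_eq_single j] at h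
    · rw [if_neg hj, coeff_X_pow, if_pos rfl, mul_one] at h
      exact h
    · intro j' _ hne
      rcases eq_or_ne ((j':ℕ)) 0 with hj' | hj'
      · rw [if_pos hj', hEcm (j:ℕ) (by omega) (by have := j.isLt; omega), mul_zero]
      · rw [if_neg hj', coeff_X_pow, if_neg (fun hh => hne (Fin.ext hh.symm)), mul_zero]
    · intro h; exact absurd (Finset.mem_univ j) h

/-- (Case 2 of Theorem 4, 'if' direction.) For n = 2k, distinct αᵢ with
∏(x-αᵢ) = ∑ σᵢ x^{n-i}, vᵢ² = λuᵢ, η_k ≠ 0, η_{k-i} = η_k σᵢ (1 ≤ i ≤ k-1) and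
η_k σ_{n-1} = 2, the TGRS code C₂ with generator rows
(vᵢ(1 + ∑_{t=1}^{k} η_t αᵢ^{k-1+t}))ᵢ and (vᵢ αᵢ^j)ᵢ, 1 ≤ j ≤ k-1, is self-dual. -/
theorem stmt15 {F : Type*} [Field F] {k : ℕ} (hk : 1 ≤ k)
    (α : Fin (2 * k) → F) (hα : Function.Injective α)
    (σ : ℕ → F)
    (hσ : ∀ i ≤ 2 * k, σ i = (∏ j, (X - C (α j))).coeff (2 * k - i))
    (u v : Fin (2 * k) → F)
    (hu : ∀ i, u i = ∏ j ∈ Finset.univ.erase i, (α i - α j)⁻¹)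
    (hv : ∀ i, v i ≠ 0)
    (hlam : ∃ l : F, l ≠ 0 ∧ ∀ i, v i ^ 2 = l * u i)
    (η : ℕ → F) (hηk : η k ≠ 0)
    (hη : ∀ i : ℕ, 1 ≤ i → i ≤ k - 1 → η (k - i) = η k * σ i)
    (hη2 : η k * σ (2 * k - 1) = 2)
    (G : Fin k → Fin (2 * k) → F)
    (hG : ∀ j i, G j i =
        if (j : ℕ) = 0 then
          v i * (1 + ∑ t ∈ Finset.Icc 1 k, η t * α i ^ (k - 1 + t))
        else v i * α i ^ (j : ℕ)) :
    Submodule.span F (Set.range G) = dualCode (Submodule.span F (Set.range G)) := by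
  obtain ⟨l, hl0, hl⟩ := hlam
  set P : F[X] := ∏ j, (X - C (α j)) with hPdef
  have hPm : P.Monic := monic_prod_of_monic _ _ fun j _ => monic_X_sub_C _
  have hPdeg : P.natDegree = 2*k := by
    rw [hPdef, natDegree_prod_of_monic _ _ fun j _ => monic_X_sub_C _]
    simp [natDegree_X_sub_C]
  have hP2k : P.coeff (2*k) = 1 := by
    have := hPm.coeff_natDegree
    rwa [hPdeg] at this
  have hσ0 : σ 0 = 1 := by rw [hσ 0 (Nat.zero_le _)]; simpa using hP2k
  set Q : F[X] := ∑ i ∈ Finset.Icc k (2*k), C (σ i) * X^(2*k - i) with hQdef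
  set M : F[X] := ∑ a ∈ Finset.range k, C (σ a) * X^(2*k - 2 - a) with hMdef
  set Q2 : F[X] := ∑ i ∈ Finset.Icc k (2*k - 2), C (σ i) * X^(2*k - 2 - i) with hQ2def
  set W : F[X] := ∑ a ∈ Finset.range k, C (σ a) * X^(2*k - 1 - a) with hWdef
  set E : F[X] := 1 + ∑ t ∈ Finset.Icc 1 k, C (η t) * X^(k - 1 + t) with hEdef
  set L : F[X] := C (σ (2*k-1)) * X + C (σ (2*k)) with hLdef
  set r : F[X] := W^2 - P*(M - Q2) with hrdef
  -- P as a sum of its coefficients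
  have hPsum : P = ∑ i ∈ Finset.range (2*k+1), C (σ i) * X^(2*k - i) := by
    conv_lhs => rw [P.as_sum_range' (2*k+1) (by omega)]
    rw [← Finset.sum_range_reflect]
    refine Finset.sum_congr rfl fun m hm => ?_
    have hm' := Finset.mem_range.mp hm
    rw [hσ m (by omega), C_mul_X_pow_eq_monomial, show 2*k+1-1-m = 2*k - m from by omega]
  have hQdeg : Q.natDegree ≤ k := by
    apply Polynomial.natDegree_sum_le_of_forall_le
    intro i hi
    refine le_trans (natDegree_C_mul_le _ _) ?_
    rw [natDegree_X_pow]
    have := Finset.mem_Icc.mp hi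
    omega
  have hM2 : X^2 * M = P - Q := by
    have hsplit : ∑ i ∈ Finset.range (2*k+1), C (σ i) * X^(2*k-i)
        = (∑ i ∈ Finset.range k, C (σ i) * X^(2*k-i))
          + ∑ i ∈ Finset.Icc k (2*k), C (σ i) * X^(2*k-i) := by
      rw [show Finset.range (2*k+1) = Finset.range k ∪ Finset.Icc k (2*k) from by
          ext x; simp only [Finset.mem_range, Finset.mem_union, Finset.mem_Icc]; omega,
        Finset.sum_union (by
          rw [Finset.disjoint_left]
          intro a ha hb
          simp only [Finset.mem_range] at ha
          simp only [Finset.mem_Icc] at hb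
          omega)]
    have hterm : ∀ a ∈ Finset.range k,
        X^2 * (C (σ a) * X^(2*k-2-a)) = C (σ a) * X^(2*k - a) := by
      intro a ha
      have := Finset.mem_range.mp ha
      rw [show 2*k - a = (2*k-2-a)+2 from by omega, pow_add]; ring
    rw [hMdef, hQdef, Finset.mul_sum, Finset.sum_congr rfl hterm, hPsum, hsplit,
      add_sub_cancel_right]
  have hQ22 : X^2 * Q2 = Q - L := by
    have e1 : ∑ i ∈ Finset.Icc k (2*k), C (σ i) * X^(2*k - i)
        = (∑ i ∈ Finset.Icc k (2*k-2), C (σ i) * X^(2*k-i))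
          + (C (σ (2*k-1)) * X^(2*k-(2*k-1)) + C (σ (2*k)) * X^(2*k-2*k)) := by
      rw [show Finset.Icc k (2*k) = insert (2*k-1) (insert (2*k) (Finset.Icc k (2*k-2))) from by
          ext x; simp only [Finset.mem_Icc, Finset.mem_insert]; omega,
        Finset.sum_insert (by simp only [Finset.mem_insert, Finset.mem_Icc]; omega),
        Finset.sum_insert (by simp only [Finset.mem_Icc]; omega)]
      ring
    have hterm : ∀ i ∈ Finset.Icc k (2*k-2),
        X^2 * (C (σ i) * X^(2*k-2-i)) = C (σ i) * X^(2*k - i) := by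
      intro i hi
      have := Finset.mem_Icc.mp hi
      rw [show 2*k - i = (2*k-2-i)+2 from by omega, pow_add]; ring
    rw [hQ2def, hQdef, hLdef, Finset.mul_sum, Finset.sum_congr rfl hterm, e1,
      show 2*k - (2*k-1) = 1 from by omega, Nat.sub_self, pow_one, pow_zero, mul_one,
      add_sub_cancel_right]
  have hWM : W = X * M := by
    rw [hWdef, hMdef, Finset.mul_sum]
    refine Finset.sum_congr rfl fun a ha => ?_
    have := Finset.mem_range.mp ha
    rw [show 2*k - 1 - a = (2*k-2-a)+1 from by omega, pow_succ]; ring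
  have hWdeg : W.natDegree ≤ 2*k-1 := by
    apply Polynomial.natDegree_sum_le_of_forall_le
    intro i hi
    refine le_trans (natDegree_C_mul_le _ _) ?_
    rw [natDegree_X_pow]; omega
  have hWcoeff : W.coeff (2*k-1) = 1 := by
    rw [hWdef, finset_sum_coeff, Finset.sum_eq_single 0]
    · simp [hσ0]
    · intro b hb hb0
      have := Finset.mem_range.mp hb
      rw [coeff_C_mul, coeff_X_pow, if_neg (by omega), mul_zero]
    · intro h; exact absurd (Finset.mem_range.mpr (by omega)) h
  have hEW : E = 1 + C (η k) * W := by
    rw [hEdef, hWdef]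
    congr 1
    rw [Finset.mul_sum]
    refine Finset.sum_nbij' (fun t => k - t) (fun a => k - a) ?_ ?_ ?_ ?_ ?_
    · intro t ht; have := Finset.mem_Icc.mp ht
      exact Finset.mem_range.mpr (by omega)
    · intro a ha; have := Finset.mem_range.mp ha
      exact Finset.mem_Icc.mpr (by omega)
    · intro t ht; have := Finset.mem_Icc.mp ht; omega
    · intro a ha; have := Finset.mem_range.mp ha; omega
    · intro t ht
      have htt := Finset.mem_Icc.mp ht
      have hηt : η t = η k * σ (k - t) := by
        rcases eq_or_lt_of_le htt.2 with h | h
        · rw [h]; simp [hσ0]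
        · have := hη (k - t) (by omega) (by omega)
          rwa [show k - (k - t) = t from by omega] at this
      rw [hηt, C_mul, show 2*k - 1 - (k - t) = k - 1 + t from by omega, mul_assoc]
  have hrX : X^2 * r = Q^2 - P*L := by
    rw [hrdef, hWM]
    linear_combination (X^2*M + P - Q - P) * hM2 + P * hQ22
  -- coefficient facts about r
  have hrc : ∀ m, r.coeff m = (Q^2 - P*L).coeff (m+2) := by
    intro m
    rw [← hrX, mul_comm, coeff_mul_X_pow]
  have hQQdeg : (Q^2).natDegree ≤ 2*k := by
    refine le_trans (natDegree_pow_le) ?_; omega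
  have hLdeg : L.natDegree ≤ 1 := by
    rw [hLdef]
    refine le_trans (natDegree_add_le _ _) ?_
    simp only [natDegree_C, max_le_iff]
    constructor
    · exact le_trans (natDegree_C_mul_le _ _) (by rw [natDegree_X])
    · omega
  have hPLdeg : (P*L).natDegree ≤ 2*k+1 := by
    refine le_trans (natDegree_mul_le) ?_; omega
  have hrdeg : r.natDegree ≤ 2*k-1 := by
    rw [natDegree_le_iff_coeff_eq_zero]
    intro N hN
    rw [hrc, coeff_sub, coeff_eq_zero_of_natDegree_lt (by omega),
      coeff_eq_zero_of_natDegree_lt (by omega), sub_zero]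
  have hrcoeff : r.coeff (2*k-1) = - σ (2*k-1) := by
    rw [hrc, show 2*k-1+2 = 2*k+1 from by omega, coeff_sub,
      coeff_eq_zero_of_natDegree_lt (by omega)]
    have hPL : (P*L).coeff (2*k+1) = σ (2*k-1) := by
      have h2 : P * L = C (σ (2*k-1)) * (P * X) + C (σ (2*k)) * P := by
        rw [hLdef]; ring
      rw [h2, coeff_add, coeff_C_mul, coeff_C_mul, coeff_mul_X, hP2k,
        coeff_eq_zero_of_natDegree_lt (by omega)]
      ring
    rw [hPL]; ring
  -- the evaluation functional
  have hS : ∀ f : F[X], f.natDegree ≤ 2*k-1 → ∑ i, u i * f.eval (α i) = f.coeff (2*k-1) := by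
    intro f hf
    have hdeg : f.degree < ((2*k : ℕ) : WithBot ℕ) := by
      refine lt_of_le_of_lt (degree_le_natDegree) ?_
      exact_mod_cast (by omega : f.natDegree < 2*k)
    simpa only [hu] using stmt15_sum_mul_eval α hα f hdeg
  have hSP : ∀ g f : F[X], ∑ i, u i * (P * g + f).eval (α i) = ∑ i, u i * f.eval (α i) := by
    intro g f
    refine Finset.sum_congr rfl fun i _ => ?_
    have hz : P.eval (α i) = 0 := by
      rw [hPdef, eval_prod]
      exact Finset.prod_eq_zero (Finset.mem_univ i) (by simp)
    rw [eval_add, eval_mul, hz, zero_mul, zero_add]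
  -- the three orthogonality computations
  have hoEE : ∑ i, u i * (E*E).eval (α i) = 0 := by
    have hid : E*E = P * (C (η k * η k) * (M - Q2))
        + (1 + C (η k + η k) * W + C (η k * η k) * r) := by
      rw [hEW, hrdef]
      simp only [C_add, C_mul]
      ring
    rw [hid, hSP, hS _ ?_]
    · rw [coeff_add, coeff_add, coeff_C_mul, coeff_C_mul, hWcoeff, hrcoeff,
        coeff_one, if_neg (by omega)]
      linear_combination (- η k) * hη2
    · refine le_trans (natDegree_add_le _ _) (max_le (le_trans (natDegree_add_le _ _)
        (max_le ?_ ?_)) ?_)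
      · simp only [natDegree_one]; omega
      · exact le_trans (natDegree_C_mul_le _ _) hWdeg
      · exact le_trans (natDegree_C_mul_le _ _) hrdeg
  have hoEX : ∀ m : ℕ, 1 ≤ m → m ≤ k-1 → ∑ i, u i * (E * X^m).eval (α i) = 0 := by
    intro m h1 h2
    obtain ⟨m', rfl⟩ : ∃ m', m = m' + 1 := ⟨m-1, by omega⟩
    have hid : E * X^(m'+1) = P * (C (η k) * X^m')
        + (X^(m'+1) - C (η k) * (X^m' * Q)) := by
      linear_combination (X^(m'+1) : F[X]) * hEW + (C (η k) * X^(m'+1)) * hWM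
        + (C (η k) * X^m') * hM2
    have hdeg : (X^(m'+1) - C (η k) * (X^m' * Q) : F[X]).natDegree ≤ 2*k-2 := by
      refine le_trans (natDegree_sub_le _ _) (max_le ?_ ?_)
      · rw [natDegree_X_pow]; omega
      · refine le_trans (natDegree_C_mul_le _ _) (le_trans (natDegree_mul_le) ?_)
        rw [natDegree_X_pow]; omega
    rw [hid, hSP, hS _ (by omega)]
    exact coeff_eq_zero_of_natDegree_lt (by omega)
  have hoXX : ∀ m m' : ℕ, 1 ≤ m → m ≤ k-1 → 1 ≤ m' → m' ≤ k-1 →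
      ∑ i, u i * (X^m * X^m' : F[X]).eval (α i) = 0 := by
    intro m m' h1 h2 h3 h4
    rw [← pow_add, hS _ (by rw [natDegree_X_pow]; omega)]
    rw [coeff_X_pow, if_neg (by omega)]
  -- the generator rows as polynomial evaluations
  have hGf : ∀ j i, G j i = v i * (if (j:ℕ) = 0 then E else X^(j:ℕ)).eval (α i) := by
    intro j i
    rw [hG]
    by_cases hj : (j:ℕ) = 0
    · rw [if_pos hj, if_pos hj, hEdef]
      simp [eval_finset_sum]
    · rw [if_neg hj, if_neg hj]
      simp
  -- orthogonality of the rows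
  have hGG : ∀ j j', ∑ i, G j i * G j' i = 0 := by
    intro j j'
    have hform : ∑ i, G j i * G j' i
        = l * ∑ i, u i * ((if (j:ℕ)=0 then E else X^(j:ℕ))
            * (if (j':ℕ)=0 then E else X^(j':ℕ))).eval (α i) := by
      rw [Finset.mul_sum]
      refine Finset.sum_congr rfl fun i _ => ?_
      rw [hGf, hGf, eval_mul]
      linear_combination (eval (α i) (if (j:ℕ)=0 then E else X^(j:ℕ))
        * eval (α i) (if (j':ℕ)=0 then E else X^(j':ℕ))) * hl i
    rw [hform]
    rcases eq_or_ne ((j:ℕ)) 0 with hj | hj <;> rcases eq_or_ne ((j':ℕ)) 0 with hj' | hj'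
    · rw [if_pos hj, if_pos hj', hoEE, mul_zero]
    · rw [if_pos hj, if_neg hj', hoEX (j':ℕ) (by omega) (by have := j'.isLt; omega), mul_zero]
    · rw [if_neg hj, if_pos hj']
      have : ∀ i : Fin (2*k), (X^(j:ℕ) * E : F[X]).eval (α i) = (E * X^(j:ℕ)).eval (α i) := by
        intro i; rw [mul_comm]
      simp only [this]
      rw [hoEX (j:ℕ) (by omega) (by have := j.isLt; omega), mul_zero]
    · rw [if_neg hj, if_neg hj',
        hoXX (j:ℕ) (j':ℕ) (by omega) (by have := j.isLt; omega)
          (by omega) (by have := j'.isLt; omega), mul_zero]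
  have hli : LinearIndependent F G :=
    stmt15_li hk α hα v hv η hηk E W hEW hWdeg hWcoeff hEdef G hGf
  exact stmt15_endgame G hGG hli rfl
end

section
/- Let F be a field, n, k positive integers with 2 ≤ k < n, α₁,...,αₙ distinct in F, ∏(x - αᵢ) = ∑_{i=0}^n σᵢ x^{n-i}, η₁,...,η_{n-k} ∈ F with η_{n-k} ≠ 0. Define b₁ = σ₁ - η_{n-k-1}/η_{n-k} and bᵢ = σᵢ - η_{n-k-i}/η_{n-k} - ∑_{j=1}^{i-1} σ_{i-j} bⱼ for 2 ≤ i ≤ n-k-1. Then the polynomial f(x) = f₀(1 - η_{n-k} ∑_{i=0}^{n-1} σ_{n-1-i} xⁱ) + ∑_{i=1}^{n-k-1} fᵢ(bᵢ + xⁱ) vanishes at all n points αⱼ only if f₀ = f₁ = ... = f_{n-k-1} = 0; equivalently, the (n-k) vectors formed by evaluating these polynomials at the αⱼ are linearly independent. -/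
open Polynomial

/-- the rank argument of Theorem 2: with σ the coefficients of ∏(x-αᵢ),
η_{n-k} ≠ 0, and b defined by b₁ = σ₁ - η_{n-k-1}/η_{n-k},
bᵢ = σᵢ - η_{n-k-i}/η_{n-k} - ∑_{j=1}^{i-1} σ_{i-j} bⱼ, if the polynomial
f₀(1 - η_{n-k} ∑_{i=0}^{n-1} σ_{n-1-i} xⁱ) + ∑_{i=1}^{n-k-1} fᵢ(bᵢ + xⁱ)
vanishes at all n points αⱼ, then f₀ = ⋯ = f_{n-k-1} = 0. -/
theorem stmt18 {F : Type*} [Field F] {n k : ℕ} (hk2 : 2 ≤ k) (hkn : k < n)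
    (α : Fin n → F) (hα : Function.Injective α)
    (σ : ℕ → F)
    (hσ : ∀ i ≤ n, σ i = (∏ j, (X - C (α j))).coeff (n - i))
    (η : ℕ → F) (hη : η (n - k) ≠ 0)
    (b : ℕ → F)
    (hb : ∀ i : ℕ, 1 ≤ i → i ≤ n - k - 1 →
        b i = σ i - η (n - k - i) / η (n - k) - ∑ j ∈ Finset.Ico 1 i, σ (i - j) * b j) :
    ∀ f : ℕ → F,
      (∀ j : Fin n,
          f 0 * (1 - η (n - k) * ∑ i ∈ Finset.range n, σ (n - 1 - i) * α j ^ i)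
            + ∑ i ∈ Finset.Ico 1 (n - k), f i * (b i + α j ^ i) = 0) →
      ∀ i < n - k, f i = 0 := by
  intro f hf
  have hn1 : 1 ≤ n := le_trans (le_trans (by norm_num) hk2) hkn.le
  set P : F[X] := C (f 0) *
      (1 - C (η (n - k)) * ∑ i ∈ Finset.range n, C (σ (n - 1 - i)) * X ^ i)
      + ∑ i ∈ Finset.Ico 1 (n - k), C (f i) * (C (b i) + X ^ i) with hP
  have heval : ∀ j : Fin n, P.eval (α j) = 0 := by
    intro j
    have := hf j
    simp only [hP, eval_add, eval_mul, eval_sub, eval_one, eval_C, eval_finset_sum,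
      eval_pow, eval_X]
    simpa using this
  have hdeg : P.natDegree < n := by
    have h1 : (∑ i ∈ Finset.range n, C (σ (n - 1 - i)) * X ^ i).natDegree ≤ n - 1 := by
      apply natDegree_sum_le_of_forall_le
      intro i hi
      refine le_trans (natDegree_C_mul_le _ _) ?_
      simpa [natDegree_X_pow] using Nat.le_sub_one_of_lt (Finset.mem_range.mp hi)
    have h2 : P.natDegree ≤ n - 1 := by
      refine le_trans (natDegree_add_le _ _) (max_le ?_ ?_)
      · refine le_trans (natDegree_C_mul_le _ _) ?_
        refine le_trans (natDegree_sub_le _ _) (max_le ?_ ?_)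
        · simp
        · exact le_trans (natDegree_C_mul_le _ _) h1
      · apply natDegree_sum_le_of_forall_le
        intro i hi
        refine le_trans (natDegree_C_mul_le _ _) ?_
        refine le_trans (natDegree_add_le _ _) (max_le (by simp) ?_)
        simp only [natDegree_X_pow]
        have := (Finset.mem_Ico.mp hi).2
        omega
    omega
  have hP0 : P = 0 := eq_zero_of_natDegree_lt_card_of_eval_eq_zero P hα heval
    (by simpa using hdeg)
  -- coefficient extraction
  have hσ0 : σ 0 = 1 := by
    rw [hσ 0 (Nat.zero_le n)]
    have hm : (∏ j : Fin n, (X - C (α j))).Monic :=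
      monic_prod_of_monic _ _ (fun j _ => monic_X_sub_C (α j))
    have hd : (∏ j : Fin n, (X - C (α j))).natDegree = n := by
      rw [natDegree_prod]
      · simp
      · intro j _; exact (monic_X_sub_C (α j)).ne_zero
    simpa [Nat.sub_zero, hd] using hm.coeff_natDegree
  have hcoeff : ∀ m, P.coeff m = 0 := fun m => by rw [hP0]; simp
  -- f 0 = 0 from coefficient at n-1
  have hf0 : f 0 = 0 := by
    have hne : n - 1 ≠ 0 := by omega
    have h := hcoeff (n - 1)
    rw [hP] at h
    simp only [coeff_add, coeff_C_mul, coeff_sub, coeff_one, finset_sum_coeff,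
      coeff_X_pow, coeff_C, if_neg hne] at h
    rw [Finset.sum_eq_single (n - 1) (fun i _ hi => by simp [Ne.symm hi])
        (fun h' => absurd (Finset.mem_range.mpr (by omega)) h'),
      Finset.sum_eq_zero (fun i hi => by
        have h2 := (Finset.mem_Ico.mp hi).2
        have h3 : n - 1 ≠ i := by omega
        simp [h3])] at h
    simp [hσ0, hη] at h
    exact h
  intro i hi
  rcases Nat.eq_zero_or_pos i with rfl | hi1
  · exact hf0
  have hne : i ≠ 0 := by omega
  have h := hcoeff i
  rw [hP] at h
  simp only [coeff_add, coeff_C_mul, coeff_sub, coeff_one, finset_sum_coeff,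
    coeff_X_pow, coeff_C, if_neg hne, hf0, zero_mul, zero_add] at h
  rw [Finset.sum_eq_single i (fun j _ hj => by simp [Ne.symm hj])
      (fun h' => absurd (Finset.mem_Ico.mpr ⟨hi1, hi⟩) h')] at h
  simpa using h
end
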